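/- Let 0 < θ₀ < 1. For all j, k, l ∈ 𝒵_L with j₃k₃ ≠ 0, j' ≠ 0, k' ≠ 0 and l ≠ 0, and all r, s ∈ {−1,+1}: if |ω_j^r + ω_k^s| > θ₀ |ω_j^r − ω_k^s| (the nonresonant regime), then |B_{jkl}^{rs0} + B_{kjl}^{sr0}| ≤ (2√5 |M| / θ₀)(|j₃| + |k₃|) |ω_j^r + ω_k^s|. -/

import Mathlib

noncomputable section
open scoped Classical

abbrev V3 := Fin 3 → ℝ

/-- Euclidean norm of a vector in ℝ³. -/
def enorm3 (k : V3) : ℝ := Real.sqrt (k 0 ^ 2 + k 1 ^ 2 + k 2 ^ 2)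

/-- Horizontal part k' = (k₁, k₂, 0). -/
def horiz (k : V3) : V3 := ![k 0, k 1, 0]

/-- The lattice 𝒵_L of wavevectors. -/
def ZL (L₁ L₂ L₃ : ℝ) : Set V3 :=
  {k | ∃ n : Fin 3 → ℤ,
    k = ![2 * Real.pi * (n 0 : ℝ) / L₁, 2 * Real.pi * (n 1 : ℝ) / L₂,
          2 * Real.pi * (n 2 : ℝ) / L₃]}

/-- Inertia–gravity frequency ω_k^s = s|k|/k₃. -/
def omg (k : V3) (s : ℝ) : ℝ := s * enorm3 k / k 2

/-- Slow eigenvector X_k^0. -/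
def X0 (k : V3) : Fin 3 → ℂ :=
  if horiz k = 0 then ![0, 0, ((Real.sign (k 2) : ℝ) : ℂ)]
  else ![((k 1 / enorm3 k : ℝ) : ℂ), ((-(k 0) / enorm3 k : ℝ) : ℂ), ((k 2 / enorm3 k : ℝ) : ℂ)]

/-- Fast eigenvectors X_k^s, s = ±1. -/
def Xs (k : V3) (s : ℝ) : Fin 3 → ℂ :=
  if horiz k = 0 then
    ![(((Real.sqrt 2)⁻¹ : ℝ) : ℂ), -Complex.I * s * (((Real.sqrt 2)⁻¹ : ℝ) : ℂ), 0]
  else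
    ![(((-(k 1) * k 2 : ℝ) : ℂ) + Complex.I * s * k 0 * enorm3 k) /
        ((Real.sqrt 2 * enorm3 (horiz k) * enorm3 k : ℝ) : ℂ),
      (((k 0 * k 2 : ℝ) : ℂ) + Complex.I * s * k 1 * enorm3 k) /
        ((Real.sqrt 2 * enorm3 (horiz k) * enorm3 k : ℝ) : ℂ),
      ((enorm3 (horiz k) ^ 2 : ℝ) : ℂ) /
        ((Real.sqrt 2 * enorm3 (horiz k) * enorm3 k : ℝ) : ℂ)]

/-- The incompressible-velocity vector V X_j^r. -/
def VX (j : V3) (r : ℝ) : Fin 3 → ℂ :=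
  if horiz j = 0 then Xs j r
  else
    ![(((-(j 1) * j 2 : ℝ) : ℂ) + Complex.I * r * j 0 * enorm3 j) /
        ((Real.sqrt 2 * enorm3 j * enorm3 (horiz j) : ℝ) : ℂ),
      (((j 0 * j 2 : ℝ) : ℂ) + Complex.I * r * j 1 * enorm3 j) /
        ((Real.sqrt 2 * enorm3 j * enorm3 (horiz j) : ℝ) : ℂ),
      (-Complex.I * r * ((enorm3 (horiz j) ^ 2 * enorm3 j / j 2 : ℝ) : ℂ)) /
        ((Real.sqrt 2 * enorm3 j * enorm3 (horiz j) : ℝ) : ℂ)]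

/-- Bilinear pairing a·b on ℂ³. -/
def dotC (a b : Fin 3 → ℂ) : ℂ := a 0 * b 0 + a 1 * b 1 + a 2 * b 2

/-- Pairing of a complex vector with a real vector. -/
def dotR (a : Fin 3 → ℂ) (k : V3) : ℂ :=
  a 0 * (k 0 : ℂ) + a 1 * (k 1 : ℂ) + a 2 * (k 2 : ℂ)

/-- The interaction coefficient B_{jkl}^{rs0}. -/
def Brs0 (M : ℝ) (j k l : V3) (r s : ℝ) : ℂ :=
  if j + k = l ∧ j 2 * k 2 ≠ 0 ∧ l ≠ 0 then
    Complex.I * M * dotR (VX j r) k * dotC (Xs k s) (X0 l)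
  else 0

/-!
Each of the two coefficients is bounded on its own. The fast eigenvector `X_k^s` and the slow
eigenvector `X_l^0` are unit vectors, so their bilinear pairing has modulus at most `1`. The first two
components of `V X_j^r` have modulus at most `1` and the third at most `|ω_j^r|`, while
`|k₁|, |k₂| ≤ |k| = |ω_k^s| |k₃|`; hence `|B_{jkl}^{rs0}| ≤ 2 |M| |k₃| (|ω_j^r| + |ω_k^s|)`.
Finally `|ω_j^r| + |ω_k^s| ≤ max |ω_j^r + ω_k^s| |ω_j^r - ω_k^s|`, and in the nonresonant regime
with `θ₀ < 1` both terms are at most `|ω_j^r + ω_k^s| / θ₀`. This yields the constant `2 ≤ 2√5`.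
-/

open Complex

lemma enorm3_nonneg (k : V3) : 0 ≤ enorm3 k := Real.sqrt_nonneg _

lemma enorm3_sq (k : V3) : enorm3 k ^ 2 = k 0 ^ 2 + k 1 ^ 2 + k 2 ^ 2 :=
  Real.sq_sqrt (by positivity)

lemma enorm3_horiz_sq (k : V3) : enorm3 (horiz k) ^ 2 = k 0 ^ 2 + k 1 ^ 2 := by
  simp [enorm3_sq, horiz]

lemma enorm3_pos {k : V3} (hk : k ≠ 0) : 0 < enorm3 k := by
  refine Real.sqrt_pos.2 (lt_of_le_of_ne (by positivity) fun h => hk ?_)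
  have h0 : k 0 = 0 := by nlinarith [sq_nonneg (k 0), sq_nonneg (k 1), sq_nonneg (k 2)]
  have h1 : k 1 = 0 := by nlinarith [sq_nonneg (k 0), sq_nonneg (k 1), sq_nonneg (k 2)]
  have h2 : k 2 = 0 := by nlinarith [sq_nonneg (k 0), sq_nonneg (k 1), sq_nonneg (k 2)]
  funext i
  fin_cases i <;> assumption

lemma abs_le_enorm3 (k : V3) (i : Fin 3) : |k i| ≤ enorm3 k := by
  rw [← Real.sqrt_sq_eq_abs]
  apply Real.sqrt_le_sqrt
  fin_cases i <;> simp <;> nlinarith [sq_nonneg (k 0), sq_nonneg (k 1), sq_nonneg (k 2)]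

lemma enorm3_horiz_le (k : V3) : enorm3 (horiz k) ≤ enorm3 k :=
  Real.sqrt_le_sqrt (by simp [horiz]; positivity)

lemma abs_omg {s : ℝ} (hs : |s| = 1) (k : V3) : |omg k s| = enorm3 k / |k 2| := by
  rw [omg, abs_div, abs_mul, hs, one_mul, abs_of_nonneg (enorm3_nonneg k)]

lemma enorm3_eq_abs_omg_mul {s : ℝ} (hs : |s| = 1) {k : V3} (hk : k 2 ≠ 0) :
    enorm3 k = |omg k s| * |k 2| := by
  rw [abs_omg hs, div_mul_cancel₀ _ (abs_ne_zero.2 hk)]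

lemma norm_ofReal_add_I_mul_div (x y d : ℝ) :
    ‖((x : ℂ) + I * y) / d‖ = √(x ^ 2 + y ^ 2) / |d| := by
  rw [norm_div, norm_real, Real.norm_eq_abs, mul_comm I, norm_add_mul_I]

lemma norm_ofReal_add_I_mul_div_le_one {x y d : ℝ} (h : x ^ 2 + y ^ 2 ≤ d ^ 2) :
    ‖((x : ℂ) + I * y) / d‖ ≤ 1 := by
  rw [norm_ofReal_add_I_mul_div, ← Real.sqrt_sq_eq_abs]
  exact div_le_one_of_le₀ (Real.sqrt_le_sqrt h) (Real.sqrt_nonneg _)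

lemma sq_norm_ofReal_add_I_mul_div (x y d : ℝ) :
    ‖((x : ℂ) + I * y) / d‖ ^ 2 = (x ^ 2 + y ^ 2) / d ^ 2 := by
  rw [norm_ofReal_add_I_mul_div, div_pow, Real.sq_sqrt (by positivity), sq_abs]

lemma sq_eq_one_of_abs_eq_one {s : ℝ} (hs : |s| = 1) : s ^ 2 = 1 := by
  rw [← sq_abs, hs, one_pow]

lemma sum_sq_norm_Xs {s : ℝ} (hs : |s| = 1) (k : V3) : ∑ i, ‖Xs k s i‖ ^ 2 = 1 := by
  rw [Fin.sum_univ_three]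
  by_cases hk : horiz k = 0
  · simp [Xs, hk, hs]
    norm_num
  have hk'_pos := enorm3_pos hk
  have hk_pos := hk'_pos.trans_le (enorm3_horiz_le k)
  have h0 : Xs k s 0 = ((-(k 1) * k 2 : ℝ) + I * (s * k 0 * enorm3 k : ℝ)) /
      (√2 * enorm3 (horiz k) * enorm3 k : ℝ) := by
    simp only [Xs, hk, if_false, Matrix.cons_val_zero]
    push_cast
    ring
  have h1 : Xs k s 1 = ((k 0 * k 2 : ℝ) + I * (s * k 1 * enorm3 k : ℝ)) /
      (√2 * enorm3 (horiz k) * enorm3 k : ℝ) := by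
    simp only [Xs, hk, if_false, Matrix.cons_val_one, Matrix.cons_val_zero]
    push_cast
    ring
  have h2 : Xs k s 2 = ((enorm3 (horiz k) ^ 2 : ℝ) + I * (0 : ℝ)) /
      (√2 * enorm3 (horiz k) * enorm3 k : ℝ) := by
    simp only [Xs, hk, if_false, Matrix.cons_val, ofReal_zero, mul_zero, add_zero]
  simp only [h0, h1, h2, sq_norm_ofReal_add_I_mul_div, mul_pow, Real.sq_sqrt zero_le_two]
  field_simp
  linear_combination (k 0 ^ 2 + k 1 ^ 2) * enorm3 k ^ 2 * sq_eq_one_of_abs_eq_one hs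
    + (enorm3 (horiz k) ^ 2 + k 0 ^ 2 + k 1 ^ 2 - 2 * enorm3 k ^ 2) * enorm3_horiz_sq k
    - (k 0 ^ 2 + k 1 ^ 2) * enorm3_sq k

lemma sum_sq_norm_X0 {l : V3} (hl : l ≠ 0) : ∑ i, ‖X0 l i‖ ^ 2 = 1 := by
  rw [Fin.sum_univ_three]
  by_cases hl' : horiz l = 0
  · have hl2 : l 2 ≠ 0 := fun h2 => hl <| by
      funext i
      fin_cases i
      exacts [congrFun hl' 0, congrFun hl' 1, h2]
    rcases hl2.lt_or_gt with h | h <;> simp [X0, hl', Real.sign_of_neg, Real.sign_of_pos, h]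
  · have hl_pos := enorm3_pos hl
    simp only [X0, if_neg hl', Matrix.cons_val_zero, Matrix.cons_val_one, Matrix.cons_val_two,
      Matrix.tail_cons, Matrix.head_cons, norm_real, Real.norm_eq_abs, sq_abs]
    field_simp
    linarith [enorm3_sq l]

lemma norm_dotC_le_one {a b : Fin 3 → ℂ} (ha : ∑ i, ‖a i‖ ^ 2 = 1)
    (hb : ∑ i, ‖b i‖ ^ 2 = 1) : ‖dotC a b‖ ≤ 1 := by
  rw [Fin.sum_univ_three] at ha hb
  calc ‖dotC a b‖ ≤ ‖a 0‖ * ‖b 0‖ + ‖a 1‖ * ‖b 1‖ + ‖a 2‖ * ‖b 2‖ := by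
        simp only [dotC, ← norm_mul]
        exact norm_add₃_le
    _ ≤ 1 := by nlinarith [two_mul_le_add_sq ‖a 0‖ ‖b 0‖, two_mul_le_add_sq ‖a 1‖ ‖b 1‖,
        two_mul_le_add_sq ‖a 2‖ ‖b 2‖]

lemma norm_dotR_le (a : Fin 3 → ℂ) (k : V3) :
    ‖dotR a k‖ ≤ ‖a 0‖ * |k 0| + ‖a 1‖ * |k 1| + ‖a 2‖ * |k 2| := by
  calc ‖dotR a k‖ ≤ ‖a 0 * k 0‖ + ‖a 1 * k 1‖ + ‖a 2 * k 2‖ := norm_add₃_le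
    _ = _ := by simp only [norm_mul, norm_real, Real.norm_eq_abs]

section VX

variable {r : ℝ} (hr : |r| = 1) (j : V3)
include hr

lemma norm_VX_zero_le_one : ‖VX j r 0‖ ≤ 1 := by
  by_cases hj : horiz j = 0
  · simpa [VX, Xs, hj, abs_of_nonneg (Real.sqrt_nonneg 2)] using
      inv_le_one_of_one_le₀ Real.one_lt_sqrt_two.le
  have h0 : VX j r 0 = ((-(j 1) * j 2 : ℝ) + I * (r * j 0 * enorm3 j : ℝ)) /
      (√2 * enorm3 j * enorm3 (horiz j) : ℝ) := by
    simp only [VX, hj, if_false, Matrix.cons_val_zero]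
    push_cast
    ring
  rw [h0]
  refine norm_ofReal_add_I_mul_div_le_one ?_
  have hj2 : j 2 ^ 2 ≤ enorm3 j ^ 2 := by nlinarith [enorm3_sq j]
  simp only [mul_pow, Real.sq_sqrt zero_le_two, sq_eq_one_of_abs_eq_one hr, enorm3_horiz_sq, neg_sq]
  nlinarith [mul_le_mul_of_nonneg_left hj2 (sq_nonneg (j 1)), sq_nonneg (j 0 * enorm3 j),
    sq_nonneg (j 1 * enorm3 j)]

lemma norm_VX_one_le_one : ‖VX j r 1‖ ≤ 1 := by
  by_cases hj : horiz j = 0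
  · simpa [VX, Xs, hj, hr, abs_of_nonneg (Real.sqrt_nonneg 2)] using
      inv_le_one_of_one_le₀ Real.one_lt_sqrt_two.le
  have h1 : VX j r 1 = ((j 0 * j 2 : ℝ) + I * (r * j 1 * enorm3 j : ℝ)) /
      (√2 * enorm3 j * enorm3 (horiz j) : ℝ) := by
    simp only [VX, hj, if_false, Matrix.cons_val_one, Matrix.cons_val_zero]
    push_cast
    ring
  rw [h1]
  refine norm_ofReal_add_I_mul_div_le_one ?_
  have hj2 : j 2 ^ 2 ≤ enorm3 j ^ 2 := by nlinarith [enorm3_sq j]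
  simp only [mul_pow, Real.sq_sqrt zero_le_two, sq_eq_one_of_abs_eq_one hr, enorm3_horiz_sq]
  nlinarith [mul_le_mul_of_nonneg_left hj2 (sq_nonneg (j 0)), sq_nonneg (j 0 * enorm3 j),
    sq_nonneg (j 1 * enorm3 j)]

lemma norm_VX_two_le_abs_omg : ‖VX j r 2‖ ≤ |omg j r| := by
  by_cases hj : horiz j = 0
  · simp [VX, Xs, hj]
  have hj'_pos := enorm3_pos hj
  have hj_pos := hj'_pos.trans_le (enorm3_horiz_le j)
  simp only [VX, hj, if_false, Matrix.cons_val_two, Matrix.tail_cons, Matrix.head_cons]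
  simp only [ofReal_div, ofReal_mul, ofReal_pow, Complex.norm_div, norm_neg, Complex.norm_mul,
    norm_I, norm_real, Real.norm_eq_abs, norm_pow, hr, one_mul, abs_of_pos hj'_pos, abs_of_pos hj_pos,
    abs_of_nonneg (Real.sqrt_nonneg 2), div_right_comm _ |j 2|, abs_omg hr]
  gcongr
  rw [div_le_iff₀ (by positivity)]
  have := mul_le_mul (enorm3_horiz_le j) Real.one_lt_sqrt_two.le zero_le_one (enorm3_nonneg j)
  nlinarith [mul_le_mul_of_nonneg_left this (mul_pos hj'_pos hj_pos).le]

end VX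

lemma norm_dotR_VX_le {r s : ℝ} (hr : |r| = 1) (hs : |s| = 1) (j : V3) {k : V3} (hk : k 2 ≠ 0) :
    ‖dotR (VX j r) k‖ ≤ 2 * |k 2| * (|omg j r| + |omg k s|) := by
  have hk0 := abs_le_enorm3 k 0
  have hk1 := abs_le_enorm3 k 1
  rw [enorm3_eq_abs_omg_mul hs hk] at hk0 hk1
  calc ‖dotR (VX j r) k‖ ≤ ‖VX j r 0‖ * |k 0| + ‖VX j r 1‖ * |k 1| + ‖VX j r 2‖ * |k 2| :=
        norm_dotR_le _ _
    _ ≤ 1 * |k 0| + 1 * |k 1| + |omg j r| * |k 2| := by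
        gcongr
        exacts [norm_VX_zero_le_one hr j, norm_VX_one_le_one hr j, norm_VX_two_le_abs_omg hr j]
    _ ≤ 2 * |k 2| * (|omg j r| + |omg k s|) := by
        nlinarith [mul_nonneg (abs_nonneg (k 2)) (abs_nonneg (omg j r))]

lemma norm_Brs0_le {M r s : ℝ} (hM : 0 ≤ M) (hr : |r| = 1) (hs : |s| = 1) (j k l : V3) :
    ‖Brs0 M j k l r s‖ ≤ 2 * M * |k 2| * (|omg j r| + |omg k s|) := by
  unfold Brs0
  split_ifs with h
  · obtain ⟨-, hjk, hl⟩ := h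
    rw [norm_mul, norm_mul, norm_mul, norm_I, norm_real, Real.norm_eq_abs, abs_of_nonneg hM,
      one_mul]
    calc M * ‖dotR (VX j r) k‖ * ‖dotC (Xs k s) (X0 l)‖
        ≤ M * (2 * |k 2| * (|omg j r| + |omg k s|)) * 1 := by
          gcongr
          exacts [norm_dotR_VX_le hr hs j (right_ne_zero_of_mul hjk),
            norm_dotC_le_one (sum_sq_norm_Xs hs k) (sum_sq_norm_X0 hl)]
      _ = 2 * M * |k 2| * (|omg j r| + |omg k s|) := by ring
  · rw [norm_zero]
    positivity

lemma abs_add_abs_le_max (a b : ℝ) : |a| + |b| ≤ max |a + b| |a - b| := by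
  rcases le_total 0 a with ha | ha <;> rcases le_total 0 b with hb | hb
  · exact le_max_of_le_left (by rw [abs_of_nonneg ha, abs_of_nonneg hb]; exact le_abs_self _)
  · exact le_max_of_le_right (by rw [abs_of_nonneg ha, abs_of_nonpos hb]; exact le_abs_self _)
  · refine le_max_of_le_right ?_
    rw [abs_of_nonpos ha, abs_of_nonneg hb, neg_add_eq_sub, abs_sub_comm]
    exact le_abs_self _
  · refine le_max_of_le_left ?_
    rw [abs_of_nonpos ha, abs_of_nonpos hb, ← neg_add]
    exact neg_le_abs _

lemma mul_abs_add_abs_le {θ a b : ℝ} (hθ0 : 0 ≤ θ) (hθ1 : θ ≤ 1) (h : θ * |a - b| < |a + b|) :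
    θ * (|a| + |b|) ≤ |a + b| := by
  rcases le_max_iff.1 (abs_add_abs_le_max a b) with hab | hab
  · calc θ * (|a| + |b|) ≤ 1 * |a + b| := by gcongr
      _ = |a + b| := one_mul _
  · exact (mul_le_mul_of_nonneg_left hab hθ0).trans h.le

theorem nonresonant_bound_general
    (θ₀ : ℝ) (hθ0 : 0 < θ₀) (hθ1 : θ₀ < 1)
    (L₁ L₂ L₃ : ℝ) (hL₁ : 0 < L₁) (hL₂ : 0 < L₂) (hL₃ : 0 < L₃)
    (j k l : V3)
    (r s : ℝ) (hr : r = 1 ∨ r = -1) (hs : s = 1 ∨ s = -1)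
    (hfar : θ₀ * |omg j r - omg k s| < |omg j r + omg k s|) :
    ‖Brs0 (L₁ * L₂ * L₃) j k l r s + Brs0 (L₁ * L₂ * L₃) k j l s r‖ ≤
      2 * Real.sqrt 5 * (L₁ * L₂ * L₃) / θ₀ * (|j 2| + |k 2|) *
        |omg j r + omg k s| := by
  have hM : 0 ≤ L₁ * L₂ * L₃ := by positivity
  have hr1 : |r| = 1 := (abs_eq zero_le_one).2 hr
  have hs1 : |s| = 1 := (abs_eq zero_le_one).2 hs
  have hfreq : |omg j r| + |omg k s| ≤ |omg j r + omg k s| / θ₀ := by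
    rw [le_div_iff₀' hθ0]
    exact mul_abs_add_abs_le hθ0.le hθ1.le hfar
  have h5 : (1 : ℝ) ≤ √5 := Real.one_le_sqrt.2 (by norm_num)
  calc _ ≤ ‖Brs0 (L₁ * L₂ * L₃) j k l r s‖ + ‖Brs0 (L₁ * L₂ * L₃) k j l s r‖ := norm_add_le _ _
    _ ≤ 2 * (L₁ * L₂ * L₃) * |k 2| * (|omg j r| + |omg k s|)
        + 2 * (L₁ * L₂ * L₃) * |j 2| * (|omg k s| + |omg j r|) :=
      add_le_add (norm_Brs0_le hM hr1 hs1 j k l) (norm_Brs0_le hM hs1 hr1 k j l)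
    _ = 2 * (L₁ * L₂ * L₃) * (|j 2| + |k 2|) * (|omg j r| + |omg k s|) := by ring
    _ ≤ 2 * (L₁ * L₂ * L₃) * (|j 2| + |k 2|) * (|omg j r + omg k s| / θ₀) := by gcongr
    _ = 2 * (L₁ * L₂ * L₃) / θ₀ * (|j 2| + |k 2|) * |omg j r + omg k s| * 1 := by ring
    _ ≤ 2 * (L₁ * L₂ * L₃) / θ₀ * (|j 2| + |k 2|) * |omg j r + omg k s| * √5 := by gcongr
    _ = _ := by ring

/-- bound in the nonresonant regime (eq. (A.13)). -/
theorem nonresonant_bound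
    (θ₀ : ℝ) (hθ0 : 0 < θ₀) (hθ1 : θ₀ < 1)
    (L₁ L₂ L₃ : ℝ) (hL₁ : 0 < L₁) (hL₂ : 0 < L₂) (hL₃ : 0 < L₃)
    (j k l : V3) (hj : j ∈ ZL L₁ L₂ L₃) (hk : k ∈ ZL L₁ L₂ L₃) (hl : l ∈ ZL L₁ L₂ L₃)
    (hjk3 : j 2 * k 2 ≠ 0) (hj' : horiz j ≠ 0) (hk' : horiz k ≠ 0) (hl0 : l ≠ 0)
    (r s : ℝ) (hr : r = 1 ∨ r = -1) (hs : s = 1 ∨ s = -1)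
    (hfar : θ₀ * |omg j r - omg k s| < |omg j r + omg k s|) :
    ‖Brs0 (L₁ * L₂ * L₃) j k l r s + Brs0 (L₁ * L₂ * L₃) k j l s r‖ ≤
      2 * Real.sqrt 5 * (L₁ * L₂ * L₃) / θ₀ * (|j 2| + |k 2|) *
        |omg j r + omg k s| :=
  nonresonant_bound_general θ₀ hθ0 hθ1 L₁ L₂ L₃ hL₁ hL₂ hL₃ j k l r s hr hs hfar
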